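/- Let X and Y be finite random variables with joint distribution P_XY, where P_X(x) > 0 for all x and P_Y(y) > 0 for all y. Define, for a finite random variable Z with X − Y − Z, the left-continuous quantile ubar ε_Z(δ) = inf{t ≥ 0 : P(ℓ(Z) ≤ t) ≥ 1 − δ}, where ℓ(z) = log max_x P_{Z|X=x}(z)/P_Z(z), and define the PML envelope ε_c(δ) = sup over all finite Z with X − Y − Z of ubar ε_Z(δ), for δ ∈ (0,1). Then the function δ ↦ ε_c(δ) is non-increasing and lower semi-continuous on (0,1). -/
import Mathlib


open Real Finset
open scoped Classical

noncomputable section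

/-- Marginal distribution of the first coordinate of a joint distribution. -/
def margX {X Y : Type} [Fintype Y] (P : X → Y → ℝ) (x : X) : ℝ := ∑ y, P x y

/-- Marginal distribution of the second coordinate of a joint distribution. -/
def margY {X Y : Type} [Fintype X] (P : X → Y → ℝ) (y : Y) : ℝ := ∑ x, P x y

/-- `P` is a joint probability distribution on `X × Y`. -/
def IsJoint {X Y : Type} [Fintype X] [Fintype Y] (P : X → Y → ℝ) : Prop :=
  (∀ x y, 0 ≤ P x y) ∧ (∑ x, ∑ y, P x y) = 1

/-- Conditional probability `P_{Y|X=x}(y)` of the second coordinate given the first. -/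
def condYX {X Y : Type} [Fintype Y] (P : X → Y → ℝ) (x : X) (y : Y) : ℝ :=
  P x y / margX P x

/-- Pointwise maximal leakage of the outcome `y`:
`ℓ(X → y) = log (max_x P_{Y|X=x}(y) / P_Y(y))`. -/
def pml {X Y : Type} [Fintype X] [Fintype Y] (P : X → Y → ℝ) (y : Y) : ℝ :=
  Real.log ((⨆ x, condYX P x y) / margY P y)

/-- `K` is a Markov kernel (a conditional distribution). -/
def IsKernel {Y Z : Type} [Fintype Z] (K : Y → Z → ℝ) : Prop :=
  (∀ y z, 0 ≤ K y z) ∧ ∀ y, (∑ z, K y z) = 1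

/-- Joint distribution of `(X, Z)` obtained by post-processing `Y` with the kernel `K`
(marginalizing out `Y`); this encodes the Markov chain `X - Y - Z`. -/
def pushKernel {X Y Z : Type} [Fintype Y] (P : X → Y → ℝ) (K : Y → Z → ℝ)
    (x : X) (z : Z) : ℝ :=
  ∑ y, P x y * K y z

/-- Left-continuous quantile of the leakage random variable:
`ubar ε_Z(δ) = inf {t ≥ 0 : ℙ(ℓ(Z) ≤ t) ≥ 1 - δ}`. -/
def ubarEps {X Z : Type} [Fintype X] [Fintype Z] (Q : X → Z → ℝ) (δ : ℝ) : ℝ :=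
  sInf {t : ℝ | 0 ≤ t ∧
    1 - δ ≤ ∑ z ∈ Finset.univ.filter (fun z => pml Q z ≤ t), margY Q z}

/-- The PML envelope: the supremum of the left-continuous leakage quantile over all
finite post-processings `Z` of `Y` (i.e., over all Markov chains `X - Y - Z`). -/
def pmlEnvelope {X Y : Type} [Fintype X] [Fintype Y] (P : X → Y → ℝ) (δ : ℝ) : ℝ :=
  sSup {e : ℝ | ∃ (n : ℕ) (K : Y → Fin n → ℝ),
    IsKernel K ∧ e = ubarEps (pushKernel P K) δ}

/-! ## Auxiliary lemmas -/

section Aux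

variable {X Z : Type} [Fintype X] [Fintype Z]

/-- The defining set of `ubarEps`. -/
def quantSet (Q : X → Z → ℝ) (δ : ℝ) : Set ℝ :=
  {t : ℝ | 0 ≤ t ∧
    1 - δ ≤ ∑ z ∈ Finset.univ.filter (fun z => pml Q z ≤ t), margY Q z}

lemma ubarEps_eq_sInf (Q : X → Z → ℝ) (δ : ℝ) : ubarEps Q δ = sInf (quantSet Q δ) := rfl

lemma quantSet_bddBelow (Q : X → Z → ℝ) (δ : ℝ) : BddBelow (quantSet Q δ) :=
  ⟨0, fun _ ht => ht.1⟩

lemma pml_le_bound [Nonempty X] (Q : X → Z → ℝ) (m : ℝ) (hm : 0 < m)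
    (hQ0 : ∀ x z, 0 ≤ Q x z) (hQm : ∀ x, m ≤ margX Q x) (z : Z) :
    pml Q z ≤ max 0 (Real.log (1 / m)) := by
  have hmY0 : 0 ≤ margY Q z := Finset.sum_nonneg fun x _ => hQ0 x z
  have hS0 : 0 ≤ ⨆ x, condYX Q x z := by
    refine le_trans ?_ (le_ciSup (Finite.bddAbove_range _) (Classical.arbitrary X))
    exact div_nonneg (hQ0 _ z) (le_trans hm.le (hQm _))
  have hr0 : 0 ≤ (⨆ x, condYX Q x z) / margY Q z := div_nonneg hS0 hmY0
  have hr : (⨆ x, condYX Q x z) / margY Q z ≤ 1 / m := by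
    rcases eq_or_lt_of_le hmY0 with h | h
    · rw [← h, div_zero]
      positivity
    · have hS : (⨆ x, condYX Q x z) ≤ margY Q z / m := by
        refine ciSup_le fun x => ?_
        have hxz : Q x z ≤ margY Q z :=
          Finset.single_le_sum (fun x _ => hQ0 x z) (Finset.mem_univ x)
        exact div_le_div₀ hmY0 hxz hm (hQm x)
      calc (⨆ x, condYX Q x z) / margY Q z ≤ (margY Q z / m) / margY Q z :=
            (div_le_div_iff_of_pos_right h).mpr hS
        _ = 1 / m := by
            rw [div_div, mul_comm, ← div_div, div_self (ne_of_gt h)]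
  unfold pml
  rcases eq_or_lt_of_le hr0 with h | h
  · rw [← h, Real.log_zero]; exact le_max_left _ _
  · exact le_trans (Real.log_le_log h hr) (le_max_right _ _)

lemma sum_margY_eq_one (Q : X → Z → ℝ) (hQ1 : ∑ x, ∑ z, Q x z = 1) :
    ∑ z, margY Q z = 1 := by
  unfold margY; rw [Finset.sum_comm]; exact hQ1

lemma bound_mem_quantSet [Nonempty X] (Q : X → Z → ℝ) (m : ℝ) (hm : 0 < m)
    (hQ0 : ∀ x z, 0 ≤ Q x z) (hQm : ∀ x, m ≤ margX Q x)
    (hQ1 : ∑ x, ∑ z, Q x z = 1) {δ : ℝ} (hδ : 0 ≤ δ) :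
    max 0 (Real.log (1 / m)) ∈ quantSet Q δ := by
  refine ⟨le_max_left _ _, ?_⟩
  rw [Finset.filter_true_of_mem fun z _ => pml_le_bound Q m hm hQ0 hQm z,
    sum_margY_eq_one Q hQ1]
  linarith

lemma ubarEps_le_bound [Nonempty X] (Q : X → Z → ℝ) (m : ℝ) (hm : 0 < m)
    (hQ0 : ∀ x z, 0 ≤ Q x z) (hQm : ∀ x, m ≤ margX Q x)
    (hQ1 : ∑ x, ∑ z, Q x z = 1) {δ : ℝ} (hδ : 0 ≤ δ) :
    ubarEps Q δ ≤ max 0 (Real.log (1 / m)) :=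
  csInf_le (quantSet_bddBelow Q δ) (bound_mem_quantSet Q m hm hQ0 hQm hQ1 hδ)

lemma ubarEps_anti [Nonempty X] (Q : X → Z → ℝ) (m : ℝ) (hm : 0 < m)
    (hQ0 : ∀ x z, 0 ≤ Q x z) (hQm : ∀ x, m ≤ margX Q x)
    (hQ1 : ∑ x, ∑ z, Q x z = 1) {δ₁ δ₂ : ℝ} (h0 : 0 ≤ δ₁) (h12 : δ₁ ≤ δ₂) :
    ubarEps Q δ₂ ≤ ubarEps Q δ₁ := by
  refine csInf_le_csInf (quantSet_bddBelow Q δ₂)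
    ⟨_, bound_mem_quantSet Q m hm hQ0 hQm hQ1 h0⟩ ?_
  rintro t ⟨ht0, ht⟩
  exact ⟨ht0, by linarith⟩

lemma ubarEps_right_const (Q : X → Z → ℝ) (δ₀ : ℝ) :
    ∃ η > 0, ∀ δ, δ₀ ≤ δ → δ < δ₀ + η → ubarEps Q δ = ubarEps Q δ₀ := by
  classical
  set F : ℝ → ℝ :=
    fun t => ∑ z ∈ Finset.univ.filter (fun z => pml Q z ≤ t), margY Q z with hF
  set V : Finset ℝ :=
    (Finset.univ : Finset Z).powerset.image (fun s => ∑ z ∈ s, margY Q z) with hV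
  have hFV : ∀ t : ℝ, F t ∈ V := fun t =>
    Finset.mem_image.mpr ⟨_, Finset.mem_powerset.mpr (Finset.filter_subset _ _), rfl⟩
  set W : Finset ℝ := V.filter (fun v => v < 1 - δ₀) with hW
  have hsets : ∀ η, (∀ v ∈ W, v ≤ 1 - δ₀ - η) → ∀ δ, δ₀ ≤ δ → δ < δ₀ + η →
      ubarEps Q δ = ubarEps Q δ₀ := by
    intro η hη δ h1 h2
    rw [ubarEps_eq_sInf, ubarEps_eq_sInf]
    congr 1
    ext t
    simp only [quantSet, Set.mem_setOf_eq, ← hF]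
    constructor
    · rintro ⟨h0, hFt⟩
      refine ⟨h0, ?_⟩
      by_contra hlt
      push_neg at hlt
      have hmem : F t ∈ W := Finset.mem_filter.mpr ⟨hFV t, hlt⟩
      have := hη _ hmem
      linarith
    · rintro ⟨h0, hFt⟩
      exact ⟨h0, by linarith⟩
  by_cases hWne : W.Nonempty
  · refine ⟨1 - δ₀ - W.max' hWne, ?_, hsets _ (fun v hv => ?_)⟩
    · have := (Finset.mem_filter.mp (W.max'_mem hWne)).2
      linarith
    · have := Finset.le_max' W v hv
      linarith
  · refine ⟨1, one_pos, hsets _ (fun v hv => absurd ⟨v, hv⟩ hWne)⟩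

end Aux

section Push

variable {X Y : Type} [Fintype X] [Fintype Y]

lemma margX_pushKernel {n : ℕ} (P : X → Y → ℝ) (K : Y → Fin n → ℝ)
    (hK : IsKernel K) (x : X) : margX (pushKernel P K) x = margX P x := by
  unfold margX pushKernel
  rw [Finset.sum_comm]
  simp_rw [← Finset.mul_sum, hK.2, mul_one]

lemma pushKernel_nonneg {n : ℕ} (P : X → Y → ℝ) (hP : ∀ x y, 0 ≤ P x y)
    (K : Y → Fin n → ℝ) (hK : IsKernel K) (x : X) (z : Fin n) :
    0 ≤ pushKernel P K x z :=
  Finset.sum_nonneg fun y _ => mul_nonneg (hP x y) (hK.1 y z)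

lemma pushKernel_sum {n : ℕ} (P : X → Y → ℝ) (hP1 : ∑ x, ∑ y, P x y = 1)
    (K : Y → Fin n → ℝ) (hK : IsKernel K) :
    ∑ x, ∑ z, pushKernel P K x z = 1 := by
  have : ∀ x, ∑ z, pushKernel P K x z = margX P x := fun x => by
    rw [← margX_pushKernel P K hK x]; rfl
  simp_rw [this]
  exact hP1

end Push


/-- The PML envelope `δ ↦ ε_c(δ)` is non-increasing and lower
semi-continuous on `(0, 1)`. -/
theorem pmlEnvelope_antitone_and_lsc
    {X Y : Type} [Fintype X] [Fintype Y]
    (P : X → Y → ℝ) (hP : IsJoint P)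
    (hPX : ∀ x, 0 < margX P x) (hPY : ∀ y, 0 < margY P y) :
    (∀ δ₁ ∈ Set.Ioo (0 : ℝ) 1, ∀ δ₂ ∈ Set.Ioo (0 : ℝ) 1, δ₁ ≤ δ₂ →
        pmlEnvelope P δ₂ ≤ pmlEnvelope P δ₁) ∧
    LowerSemicontinuousOn (pmlEnvelope P) (Set.Ioo (0 : ℝ) 1) := by
  classical
  -- X is nonempty
  have hXne : Nonempty X := by
    by_contra h
    rw [not_nonempty_iff] at h
    have h2 := hP.2
    rw [Finset.univ_eq_empty, Finset.sum_empty] at h2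
    norm_num at h2
  -- the minimum mass of margX P
  set m : ℝ := Finset.univ.inf' Finset.univ_nonempty (margX P) with hm
  have hm0 : 0 < m := by
    rw [hm, Finset.lt_inf'_iff]
    exact fun x _ => hPX x
  have hmle : ∀ x, m ≤ margX P x := fun x => Finset.inf'_le _ (Finset.mem_univ x)
  set B : ℝ := max 0 (Real.log (1 / m)) with hB
  -- the set whose sSup is the envelope
  set SS : ℝ → Set ℝ := fun δ => {e : ℝ | ∃ (n : ℕ) (K : Y → Fin n → ℝ),
    IsKernel K ∧ e = ubarEps (pushKernel P K) δ} with hSS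
  have hEnv : ∀ δ, pmlEnvelope P δ = sSup (SS δ) := fun δ => rfl
  -- properties of push-forward joints
  have hQm : ∀ (n : ℕ) (K : Y → Fin n → ℝ), IsKernel K →
      ∀ x, m ≤ margX (pushKernel P K) x := fun n K hK x => by
    rw [margX_pushKernel P K hK]; exact hmle x
  -- each element of SS δ is at most B, for 0 ≤ δ
  have hle : ∀ {δ : ℝ}, 0 ≤ δ → ∀ e ∈ SS δ, e ≤ B := by
    rintro δ hδ e ⟨n, K, hK, rfl⟩
    exact ubarEps_le_bound _ m hm0 (pushKernel_nonneg P hP.1 K hK) (hQm n K hK)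
      (pushKernel_sum P hP.2 K hK) hδ
  have hbdd : ∀ {δ : ℝ}, 0 ≤ δ → BddAbove (SS δ) := fun {δ} hδ => ⟨B, fun e he => hle hδ e he⟩
  -- SS δ is nonempty (trivial kernel onto Fin 1)
  have hKone : IsKernel (fun (_ : Y) (_ : Fin 1) => (1 : ℝ)) :=
    ⟨fun _ _ => zero_le_one, fun _ => by simp⟩
  have hne : ∀ δ : ℝ, (SS δ).Nonempty := fun δ =>
    ⟨_, 1, fun _ _ => (1 : ℝ), hKone, rfl⟩
  constructor
  · -- antitonicity
    rintro δ₁ hδ₁ δ₂ hδ₂ h12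
    rw [hEnv, hEnv]
    refine csSup_le (hne δ₂) ?_
    rintro e ⟨n, K, hK, rfl⟩
    calc ubarEps (pushKernel P K) δ₂ ≤ ubarEps (pushKernel P K) δ₁ :=
          ubarEps_anti _ m hm0 (pushKernel_nonneg P hP.1 K hK) (hQm n K hK)
            (pushKernel_sum P hP.2 K hK) hδ₁.1.le h12
      _ ≤ sSup (SS δ₁) := le_csSup (hbdd hδ₁.1.le) ⟨n, K, hK, rfl⟩
  · -- lower semicontinuity
    intro δ₀ hδ₀ c hc
    rw [hEnv] at hc
    obtain ⟨e, heSS, hce⟩ := exists_lt_of_lt_csSup (hne δ₀) hc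
    obtain ⟨n, K, hK, rfl⟩ := heSS
    obtain ⟨η, hη, hconst⟩ := ubarEps_right_const (pushKernel P K) δ₀
    filter_upwards [mem_nhdsWithin_of_mem_nhds
      (Iio_mem_nhds (lt_add_of_pos_right δ₀ hη)), self_mem_nhdsWithin]
      with δ hδIio hδIoo
    have hc' : c < ubarEps (pushKernel P K) δ := by
      rcases le_or_gt δ δ₀ with h | h
      · exact lt_of_lt_of_le hce
          (ubarEps_anti _ m hm0 (pushKernel_nonneg P hP.1 K hK) (hQm n K hK)
            (pushKernel_sum P hP.2 K hK) hδIoo.1.le h)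
      · rw [hconst δ h.le hδIio]; exact hce
    exact lt_of_lt_of_le hc'
      (le_csSup (hbdd hδIoo.1.le) ⟨n, K, hK, rfl⟩)
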